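/- arXiv:1807.03395 — 2 statements merged into one kernel-verified Lean document; each statement's English description precedes it below -/
import Mathlib

section
/- For real numbers a > b > 0, a positive integer l, and any natural number i ≤ l, the coefficient of x^i in the polynomial (1 + a·x)·(1 + b·x)^{l-1} is at most the coefficient of x^i in (1 + (a/l + (l-1)·b/l)·x)^l. -/
open Polynomial

/-!
Write `l = k + 1` and `d = (a - b) / l`, so that the mean `(a + k b) / l` is `b + d`.
By Pascal's rule and `l · C(k, j) = C(l, j + 1) · (j + 1)`, the coefficient of `x^(j+1)` on the
left is `C(l, j + 1) · (b^(j+1) + (j + 1) b^j d)`, while the one on the right is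
`C(l, j + 1) · (b + d)^(j+1)`; Bernoulli's inequality compares the two since `b, d ≥ 0`.
-/

namespace Polynomial

variable {R : Type*}

theorem coeff_one_add_C_mul_X_pow [CommSemiring R] (c : R) (n k : ℕ) :
    ((1 + C c * X) ^ n).coeff k = n.choose k * c ^ k := by
  have hcomp : (1 + C c * X) ^ n = ((1 + X) ^ n).comp (C c * X) := by
    rw [pow_comp, add_comp, one_comp, X_comp]
  rw [hcomp, comp_C_mul_X_coeff, coeff_one_add_X_pow]

theorem coeff_one_add_C_mul_X_mul_succ [Semiring R] (c : R) (p : R[X]) (j : ℕ) :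
    ((1 + C c * X) * p).coeff (j + 1) = p.coeff (j + 1) + c * p.coeff j := by
  rw [add_mul, one_mul, mul_assoc, coeff_add, coeff_C_mul, coeff_X_mul]

end Polynomial

section Binomial

variable {K : Type*} [Field K]

theorem choose_mul_pow_add_mul_choose_mul_pow [CharZero K] (a b : K) (k j : ℕ) :
    k.choose (j + 1) * b ^ (j + 1) + a * (k.choose j * b ^ j) =
      (k + 1).choose (j + 1) * (b ^ (j + 1) + (j + 1) * b ^ j * ((a - b) / (k + 1))) := by
  have hpascal : ((k + 1).choose (j + 1) : K) = k.choose j + k.choose (j + 1) := by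
    exact_mod_cast Nat.choose_succ_succ k j
  have habsorb : ((k : K) + 1) * k.choose j = (k + 1).choose (j + 1) * (j + 1) := by
    exact_mod_cast Nat.add_one_mul_choose_eq k j
  have hk : (k : K) + 1 ≠ 0 := by exact_mod_cast k.succ_ne_zero
  field_simp
  linear_combination (b ^ j * (a - b)) * habsorb - ((k + 1) * b ^ (j + 1)) * hpascal

theorem choose_mul_pow_add_mul_choose_mul_pow_le [LinearOrder K] [IsStrictOrderedRing K]
    {a b : K} (hb : 0 ≤ b) (hba : b ≤ a) (k j : ℕ) :
    k.choose (j + 1) * b ^ (j + 1) + a * (k.choose j * b ^ j) ≤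
      (k + 1).choose (j + 1) * (b + (a - b) / (k + 1)) ^ (j + 1) := by
  have hd : 0 ≤ (a - b) / (k + 1) := div_nonneg (sub_nonneg.mpr hba) (by positivity)
  have hbernoulli := pow_add_mul_le_add_pow (b := (a - b) / (k + 1)) hb (by linarith) (j + 1)
  push_cast at hbernoulli
  rw [choose_mul_pow_add_mul_choose_mul_pow]
  gcongr

end Binomial

theorem coeff_le_general (a b : ℝ) (hab : a > b) (hb : b > 0) (l : ℕ) (hl : 0 < l)
    (i : ℕ) :
    ((1 + C a * X) * (1 + C b * X) ^ (l - 1)).coeff i ≤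
      ((1 + C (a / l + ((l : ℝ) - 1) * b / l) * X) ^ l).coeff i := by
  obtain ⟨k, rfl⟩ : ∃ k, l = k + 1 := ⟨l - 1, by omega⟩
  have hmean : a / ↑(k + 1) + ((↑(k + 1) : ℝ) - 1) * b / ↑(k + 1) = b + (a - b) / (k + 1) := by
    push_cast
    field_simp
    ring
  rw [Nat.add_sub_cancel, hmean, coeff_one_add_C_mul_X_pow]
  cases i with
  | zero => simp [coeff_one_add_C_mul_X_pow]
  | succ j =>
    rw [coeff_one_add_C_mul_X_mul_succ, coeff_one_add_C_mul_X_pow, coeff_one_add_C_mul_X_pow]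
    exact choose_mul_pow_add_mul_choose_mul_pow_le hb.le hab.le k j

theorem coeff_le (a b : ℝ) (hab : a > b) (hb : b > 0) (l : ℕ) (hl : 0 < l)
    (i : ℕ) (hi : i ≤ l) :
    ((1 + C a * X) * (1 + C b * X) ^ (l - 1)).coeff i ≤
      ((1 + C (a / l + ((l : ℝ) - 1) * b / l) * X) ^ l).coeff i :=
  coeff_le_general a b hab hb l hl i
end

section
/- For any c > 1 with m and m/c positive integers, and any α ≥ 0, the sum over l from 0 to m/c of e^{-α l} · C(m/c, l) · C(m - m/c, m/c - l) is at most C(m, m/c) · (1 - 1/c + e^{-α}/c)^{m/c}. -/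
/-!
The left-hand side is the elementary symmetric polynomial `e_s` of the `m` numbers consisting of
`s` copies of `e^{-α}` and `m - s` ones, i.e. the coefficient of `X^s` in
`(1 + e^{-α} X)^s (1 + X)^{m-s}`, and the right-hand side is `C(m, s) μ^s` for their mean `μ`.
The bound `e_k ≤ C(N, k) μ^k` for nonnegative reals (a weak form of Maclaurin's inequality) follows
by induction on `N`: adjoining a number `x` gives `e_k' = e_k + x e_{k-1}`, and after the induction
hypothesis the step reduces to the tangent-line inequality `μ^k + k μ^{k-1} (ν - μ) ≤ ν^k` for
the new mean `ν`.
-/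

open Finset Polynomial

theorem Polynomial.coeff_one_add_C_mul_X_pow_s4 {R : Type*} [CommSemiring R] (t : R) (j i : ℕ) :
    ((1 + C t * X) ^ j).coeff i = t ^ i * j.choose i := by
  rw [add_comm, add_pow]
  simp +contextual [finsetSum_coeff, mul_pow, ← C_pow, coeff_C_mul, -map_pow, ← Nat.cast_comm,
    Nat.choose_eq_zero_of_lt]

theorem Polynomial.coeff_one_add_C_mul_X_pow_mul_one_add_X_pow {R : Type*} [CommSemiring R]
    (t : R) (j n k : ℕ) :
    ((1 + C t * X) ^ j * (1 + X) ^ n).coeff k =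
      ∑ l ∈ range (k + 1), t ^ l * j.choose l * n.choose (k - l) := by
  simp [coeff_mul, Nat.sum_antidiagonal_eq_sum_range_succ_mk, coeff_one_add_C_mul_X_pow_s4,
    coeff_one_add_X_pow, mul_assoc]

section OrderedField

variable {K : Type*} [Field K] [LinearOrder K] [IsStrictOrderedRing K]

theorem choose_mul_pow_add_mul_choose_mul_pow_le_s4 (N k : ℕ) {μ x : K} (hμ : 0 ≤ μ) (hx : 0 ≤ x) :
    N.choose (k + 1) * μ ^ (k + 1) + x * (N.choose k * μ ^ k) ≤
      (N + 1).choose (k + 1) * ((x + N * μ) / (N + 1)) ^ (k + 1) := by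
  have hpascal : ((N + 1).choose (k + 1) : K) = N.choose k + N.choose (k + 1) := by
    exact_mod_cast Nat.choose_succ_succ N k
  have habsorb : ((N : K) + 1) * N.choose k = (N + 1).choose (k + 1) * (k + 1) := by
    exact_mod_cast Nat.add_one_mul_choose_eq N k
  set ν := (x + N * μ) / (N + 1) with hν
  have hmean : x - μ = (N + 1) * (ν - μ) := by rw [hν]; field_simp; ring
  have htangent : μ ^ (k + 1) + (k + 1) * μ ^ k * (ν - μ) ≤ ν ^ (k + 1) := by
    have hν0 : 0 ≤ ν := by positivity
    simpa using pow_add_mul_le_add_pow hμ (b := ν - μ) (by linarith) (k + 1)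
  calc N.choose (k + 1) * μ ^ (k + 1) + x * (N.choose k * μ ^ k)
      = (N + 1).choose (k + 1) * μ ^ (k + 1) + (N + 1) * N.choose k * μ ^ k * (ν - μ) := by
        rw [hpascal]; linear_combination (N.choose k * μ ^ k) * hmean
    _ = (N + 1).choose (k + 1) * (μ ^ (k + 1) + (k + 1) * μ ^ k * (ν - μ)) := by
        rw [habsorb]; ring
    _ ≤ (N + 1).choose (k + 1) * ν ^ (k + 1) := by gcongr

theorem Multiset.coeff_prod_one_add_C_mul_X_le (s : Multiset K) (hs : ∀ a ∈ s, 0 ≤ a) (k : ℕ) :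
    ((s.map fun a => 1 + C a * X).prod).coeff k ≤ s.card.choose k * (s.sum / s.card) ^ k := by
  induction s using Multiset.induction_on generalizing k with
  | empty => cases k <;> simp [coeff_one]
  | cons a s ih =>
    have ha : 0 ≤ a := hs a (Multiset.mem_cons_self a s)
    have hs : ∀ b ∈ s, 0 ≤ b := fun b hb => hs b (Multiset.mem_cons_of_mem hb)
    have hμ : 0 ≤ s.sum / s.card := div_nonneg (Multiset.sum_nonneg hs) s.card.cast_nonneg
    have hcard_mul_mean : (s.card : K) * (s.sum / s.card) = s.sum := by
      rcases eq_or_ne s 0 with rfl | hs0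
      · simp
      · exact mul_div_cancel₀ _ (by simpa using hs0)
    set P := (s.map fun a => 1 + C a * X).prod
    have hcons : ((a ::ₘ s).map fun a => 1 + C a * X).prod = P + C a * (X * P) := by
      simp only [Multiset.map_cons, Multiset.prod_cons, P]; ring
    rw [hcons, Multiset.card_cons, Multiset.sum_cons]
    cases k with
    | zero => simpa using ih hs 0
    | succ k =>
      calc (P + C a * (X * P)).coeff (k + 1) = P.coeff (k + 1) + a * P.coeff k := by
            simp [coeff_X_mul]
        _ ≤ s.card.choose (k + 1) * (s.sum / s.card) ^ (k + 1) +
              a * (s.card.choose k * (s.sum / s.card) ^ k) := by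
            gcongr <;> exact ih hs _
        _ ≤ _ := by
            simpa only [hcard_mul_mean, Nat.cast_add_one] using
              choose_mul_pow_add_mul_choose_mul_pow_le_s4 s.card k hμ ha

theorem sum_pow_mul_choose_mul_choose_le (j n k : ℕ) {t : K} (ht : 0 ≤ t) :
    ∑ l ∈ range (k + 1), t ^ l * j.choose l * n.choose (k - l) ≤
      (j + n).choose k * ((j * t + n) / (j + n)) ^ k := by
  have h := Multiset.coeff_prod_one_add_C_mul_X_le (Multiset.replicate j t + Multiset.replicate n 1)
    (fun a ha => by
      rcases Multiset.mem_add.1 ha with h | h <;> rw [Multiset.eq_of_mem_replicate h]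
      exacts [ht, zero_le_one]) k
  simpa [Multiset.prod_replicate, coeff_one_add_C_mul_X_pow_mul_one_add_X_pow] using h

end OrderedField

theorem weighted_vandermonde_general (m s : ℕ) (c α : ℝ) (hc : 1 < c)
    (hm : (m : ℝ) = c * s) :
    ∑ l ∈ Finset.range (s + 1),
        Real.exp (-α * l) * (s.choose l : ℝ) * ((m - s).choose (s - l) : ℝ) ≤
      (m.choose s : ℝ) * (1 - 1 / c + Real.exp (-α) / c) ^ s := by
  obtain rfl | hs := Nat.eq_zero_or_pos s
  · simp
  have hsm : s ≤ m := by exact_mod_cast (show (s : ℝ) ≤ m by rw [hm]; nlinarith)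
  have hmean : (s * Real.exp (-α) + (m - s : ℕ)) / (s + (m - s : ℕ)) =
      1 - 1 / c + Real.exp (-α) / c := by
    rw [Nat.cast_sub hsm, hm, add_sub_cancel]
    field_simp
    ring
  calc _ = ∑ l ∈ range (s + 1), Real.exp (-α) ^ l * s.choose l * (m - s).choose (s - l) := by
        refine sum_congr rfl fun l _ => ?_
        rw [← Real.exp_nat_mul, mul_comm (l : ℝ)]
    _ ≤ _ := sum_pow_mul_choose_mul_choose_le s (m - s) s (Real.exp_pos _).le
    _ = _ := by push_cast [hmean]; rw [Nat.add_sub_cancel' hsm]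

theorem weighted_vandermonde (m s : ℕ) (c α : ℝ) (hc : 1 < c) (hs : 0 < s)
    (hm : (m : ℝ) = c * s) (hα : 0 ≤ α) :
    ∑ l ∈ Finset.range (s + 1),
        Real.exp (-α * l) * (s.choose l : ℝ) * ((m - s).choose (s - l) : ℝ) ≤
      (m.choose s : ℝ) * (1 - 1 / c + Real.exp (-α) / c) ^ s :=
  weighted_vandermonde_general m s c α hc hm
end
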